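/- arXiv:1407.5119 — 3 statements merged into one kernel-verified Lean document; each statement's English description precedes it below -/
import Mathlib

section
/- Let τ be a real quadratic irrationality and let N ≥ 1 be an integer. Then there exists a matrix γ = [[a, b], [c, d]] in SL₂(ℤ) with γ ≡ I (mod N) (entrywise congruence to the identity matrix modulo N), γ ≠ I and γ ≠ −I, such that γ fixes τ under the fractional linear action, i.e., a·τ + b = τ·(c·τ + d). -/
/-- Every real quadratic irrationality τ is fixed by some element of the
principal congruence subgroup Γ(N) of SL₂(ℤ) other than ±I. -/
theorem exists_fixing_element_in_principal_congruence_subgroup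
    (τ : ℝ) (hirr : Irrational τ)
    (hquad : ∃ A B C : ℤ, A ≠ 0 ∧ (A : ℝ) * τ ^ 2 + (B : ℝ) * τ + (C : ℝ) = 0)
    (N : ℕ) (hN : 1 ≤ N) :
    ∃ a b c d : ℤ,
      a * d - b * c = 1 ∧
      (N : ℤ) ∣ a - 1 ∧ (N : ℤ) ∣ b ∧ (N : ℤ) ∣ c ∧ (N : ℤ) ∣ d - 1 ∧
      ¬(a = 1 ∧ b = 0 ∧ c = 0 ∧ d = 1) ∧
      ¬(a = -1 ∧ b = 0 ∧ c = 0 ∧ d = -1) ∧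
      (a : ℝ) * τ + (b : ℝ) = τ * ((c : ℝ) * τ + (d : ℝ)) := by
  obtain ⟨A, B, C, hA, hABC⟩ := hquad
  have hAR : (A : ℝ) ≠ 0 := Int.cast_ne_zero.mpr hA
  set D : ℤ := B ^ 2 - 4 * A * C with hD
  -- (D : ℝ) = (2Aτ + B)^2
  have hDsq : (D : ℝ) = (2 * A * τ + B) ^ 2 := by
    push_cast [hD]
    linear_combination (-4 * (A : ℝ)) * hABC
  -- 2Aτ + B ≠ 0
  have hlin : (2 * A * τ + B : ℝ) ≠ 0 := by
    intro h
    apply hirr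
    refine ⟨(-B : ℚ) / (2 * A), ?_⟩
    have h2A : (2 * (A : ℝ)) ≠ 0 := by positivity
    push_cast
    field_simp
    linarith
  have hDpos : 0 < D := by
    have : (0 : ℝ) < (D : ℝ) := by
      rw [hDsq]; positivity
    exact_mod_cast this
  have hDns : ¬ IsSquare D := by
    rintro ⟨k, hk⟩
    have hk' : (D : ℝ) = (k : ℝ) ^ 2 := by rw [hk]; push_cast; ring
    have : ((2 * A * τ + B : ℝ) - k) * ((2 * A * τ + B : ℝ) + k) = 0 := by
      rw [hDsq] at hk'; linear_combination hk'
    rcases mul_eq_zero.mp this with h | h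
    · apply hirr
      refine ⟨((k : ℚ) - B) / (2 * A), ?_⟩
      push_cast
      field_simp
      linarith
    · apply hirr
      refine ⟨((-k : ℚ) - B) / (2 * A), ?_⟩
      push_cast
      field_simp
      linarith
  have hNZ : ((N : ℤ)) ≠ 0 := by positivity
  -- Pell for D * N^2
  have hdns : ¬ IsSquare (D * (N : ℤ) ^ 2) := by
    rintro ⟨k, hk⟩
    apply hDns
    have hdvd : (N : ℤ) ∣ k := by
      have h2 : ((N : ℤ)) ^ 2 ∣ k ^ 2 := ⟨D, by linarith [hk, sq k]⟩
      exact (Int.pow_dvd_pow_iff two_ne_zero).mp h2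
    obtain ⟨m, hm⟩ := hdvd
    refine ⟨m, ?_⟩
    have : D * (N : ℤ) ^ 2 = (m * m) * (N : ℤ) ^ 2 := by
      rw [hk, hm]; ring
    exact mul_right_cancel₀ (pow_ne_zero 2 hNZ) this
  have hdpos : 0 < D * (N : ℤ) ^ 2 := by positivity
  obtain ⟨X, Y, hXY, hY⟩ := Pell.exists_of_not_isSquare hdpos hdns
  have hX : X ≠ 0 := by
    intro h
    rw [h] at hXY
    nlinarith [sq_nonneg Y, hDpos, sq_nonneg ((N : ℤ) * Y)]
  set y : ℤ := 2 * X * (N : ℤ) * Y with hy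
  have hyne : y ≠ 0 := by
    simp only [hy]
    positivity
  set x : ℤ := 2 * X ^ 2 - 1 with hx
  refine ⟨x - B * y, -2 * C * y, 2 * A * y, x + B * y, ?_, ?_, ?_, ?_, ?_, ?_, ?_, ?_⟩
  · -- determinant
    simp only [hx, hy, hD] at hXY ⊢
    linear_combination (4 * X ^ 2) * hXY
  · exact ⟨2 * D * (N : ℤ) * Y ^ 2 - 2 * B * X * Y, by
      simp only [hx, hy]; linear_combination 2 * hXY⟩
  · exact ⟨-4 * C * X * Y, by rw [hy]; ring⟩
  · exact ⟨4 * A * X * Y, by rw [hy]; ring⟩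
  · exact ⟨2 * D * (N : ℤ) * Y ^ 2 + 2 * B * X * Y, by
      simp only [hx, hy]; linear_combination 2 * hXY⟩
  · rintro ⟨-, -, hc, -⟩
    exact mul_ne_zero (mul_ne_zero two_ne_zero hA) hyne hc
  · rintro ⟨-, -, hc, -⟩
    exact mul_ne_zero (mul_ne_zero two_ne_zero hA) hyne hc
  · push_cast
    linear_combination (-2 * (y : ℝ)) * hABC
end

section
/- Let a ≤ 0 and b ≤ 0 be integers and let s > 1 be an integer of the same parity as b. Then for every irrational real number τ there exist ε > 0 and a polynomial p with rational coefficients such that for every irrational real τ' with |τ' − τ| < ε, one has Σ_{n=1}^∞ cos(πnτ')^{-a} · sin(πnτ')^{-b} / n^s = π^s · p(τ'). (In other words, ψ_s^{a,b} is π^s times a piecewise polynomial with rational coefficients.) -/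
/-!
Since `cos x ^ A * sin x ^ B` is, by the product-to-sum formulas, a rational combination of the
`cos (k x)` (`B` even) or of the `sin (k x)` (`B` odd), it suffices to treat the series
`∑ cos (k π n τ) / n ^ s` (`s` even) and `∑ sin (k π n τ) / n ^ s` (`s` odd). By the Fourier
expansion of the Bernoulli polynomials these equal `π ^ s` times a rational multiple of
`B_s (fract (k τ / 2))`, and for irrational `τ` the floor of `k τ' / 2` is constant for `τ'` near
`τ`, so that `fract (k τ' / 2) = k τ' / 2 - ⌊k τ / 2⌋` is there a polynomial in `τ'`.
-/

open Real Polynomial Filter Topology Submodule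
open scoped Nat

-- Only the parity of `j` matters; it will be that of the exponent of `sin` in `cos ^ A * sin ^ B`.
noncomputable def trigHarmonic (j : ℕ) (k : ℤ) (x : ℝ) : ℝ :=
  if Even j then cos (k * x) else sin (k * x)

noncomputable def trigHarmonicSpan (j : ℕ) : Submodule ℚ (ℝ → ℝ) :=
  span ℚ (Set.range (trigHarmonic j))

lemma trigHarmonic_mem_trigHarmonicSpan (j : ℕ) (k : ℤ) : trigHarmonic j k ∈ trigHarmonicSpan j :=
  subset_span ⟨k, rfl⟩

lemma trigHarmonic_eq_of_even_iff {i j : ℕ} (h : Even i ↔ Even j) :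
    trigHarmonic i = trigHarmonic j := by
  ext k x
  simp only [trigHarmonic, h]

lemma cos_mul_trigHarmonic_mem (j : ℕ) (k : ℤ) : cos * trigHarmonic j k ∈ trigHarmonicSpan j := by
  have h : cos * trigHarmonic j k =
      (2⁻¹ : ℚ) • trigHarmonic j (k + 1) + (2⁻¹ : ℚ) • trigHarmonic j (k - 1) := by
    ext x
    simp only [Pi.mul_apply, Pi.add_apply, Pi.smul_apply, Rat.smul_def, trigHarmonic]
    split_ifs <;> push_cast <;>
      simp only [add_mul, sub_mul, one_mul, cos_add, cos_sub, sin_add, sin_sub] <;> ring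
  rw [h]
  exact add_mem (smul_mem _ _ (trigHarmonic_mem_trigHarmonicSpan _ _))
    (smul_mem _ _ (trigHarmonic_mem_trigHarmonicSpan _ _))

lemma sin_mul_trigHarmonic_mem (j : ℕ) (k : ℤ) :
    sin * trigHarmonic j k ∈ trigHarmonicSpan (j + 1) := by
  have h : sin * trigHarmonic j k = if Even j then
      (2⁻¹ : ℚ) • trigHarmonic (j + 1) (k + 1) - (2⁻¹ : ℚ) • trigHarmonic (j + 1) (k - 1) else
      (2⁻¹ : ℚ) • trigHarmonic (j + 1) (k - 1) - (2⁻¹ : ℚ) • trigHarmonic (j + 1) (k + 1) := by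
    ext x
    by_cases hj : Even j <;>
    simp only [hj, if_true, if_false, Pi.mul_apply, Pi.sub_apply, Pi.smul_apply, Rat.smul_def,
      trigHarmonic, Nat.even_add_one, not_true, not_false_eq_true] <;> push_cast <;>
      simp only [add_mul, sub_mul, one_mul, cos_add, cos_sub, sin_add, sin_sub] <;> ring
  rw [h]
  split_ifs <;>
  exact sub_mem (smul_mem _ _ (trigHarmonic_mem_trigHarmonicSpan _ _))
    (smul_mem _ _ (trigHarmonic_mem_trigHarmonicSpan _ _))

lemma mul_mem_trigHarmonicSpan {i j : ℕ} {g f : ℝ → ℝ}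
    (hg : ∀ k, g * trigHarmonic i k ∈ trigHarmonicSpan j) (hf : f ∈ trigHarmonicSpan i) :
    g * f ∈ trigHarmonicSpan j :=
  (span_le (p := (trigHarmonicSpan j).comap (LinearMap.mulLeft ℚ g)).mpr
    (Set.range_subset_iff.mpr hg)) hf

lemma cos_pow_mul_sin_pow_mem_trigHarmonicSpan (A B : ℕ) :
    cos ^ A * sin ^ B ∈ trigHarmonicSpan B := by
  induction A with
  | zero =>
    rw [pow_zero, one_mul]
    induction B with
    | zero =>
      convert trigHarmonic_mem_trigHarmonicSpan 0 0
      ext x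
      simp [trigHarmonic]
    | succ B ih =>
      rw [pow_succ']
      exact mul_mem_trigHarmonicSpan (sin_mul_trigHarmonic_mem B) ih
  | succ A ih =>
    rw [pow_succ', mul_assoc]
    exact mul_mem_trigHarmonicSpan (cos_mul_trigHarmonic_mem B) ih

lemma hasSum_cos_div_pow {m : ℕ} (hm : m ≠ 0) (z : ℝ) :
    HasSum (fun n : ℕ => cos (2 * π * (n + 1) * z) / ((n : ℝ) + 1) ^ (2 * m))
      ((-1) ^ (m + 1) * (2 * π) ^ (2 * m) / 2 / (2 * m)! *
        aeval (Int.fract z) (Polynomial.bernoulli (2 * m))) := by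
  have H := (hasSum_nat_add_iff' 1).mpr <| hasSum_one_div_nat_pow_mul_cos hm
    ⟨Int.fract_nonneg z, (Int.fract_lt_one z).le⟩
  simp only [Finset.range_one, Finset.sum_singleton, Nat.cast_zero, ne_eq, mul_eq_zero,
    OfNat.ofNat_ne_zero, hm, or_self, not_false_eq_true, zero_pow, div_zero, zero_mul, sub_zero,
    Nat.cast_add, Nat.cast_one] at H
  rw [aeval_def, ← eval_map]
  refine H.congr_fun fun n => ?_
  rw [← Int.self_sub_floor, one_div_mul_eq_div, div_left_inj' (by positivity)]
  rw [show 2 * π * (n + 1) * (z - ⌊z⌋) = 2 * π * (n + 1) * z - ((n + 1) * ⌊z⌋ : ℤ) * (2 * π) by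
    push_cast; ring, cos_sub_int_mul_two_pi]

lemma hasSum_sin_div_pow {m : ℕ} (hm : m ≠ 0) (z : ℝ) :
    HasSum (fun n : ℕ => sin (2 * π * (n + 1) * z) / ((n : ℝ) + 1) ^ (2 * m + 1))
      ((-1) ^ (m + 1) * (2 * π) ^ (2 * m + 1) / 2 / (2 * m + 1)! *
        aeval (Int.fract z) (Polynomial.bernoulli (2 * m + 1))) := by
  have H := (hasSum_nat_add_iff' 1).mpr <| hasSum_one_div_nat_pow_mul_sin hm
    ⟨Int.fract_nonneg z, (Int.fract_lt_one z).le⟩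
  simp only [Finset.range_one, Finset.sum_singleton, Nat.cast_zero, ne_eq, add_eq_zero,
    one_ne_zero, and_false, not_false_eq_true, zero_pow, div_zero, zero_mul, sub_zero,
    Nat.cast_add, Nat.cast_one] at H
  rw [aeval_def, ← eval_map]
  refine H.congr_fun fun n => ?_
  rw [← Int.self_sub_floor, one_div_mul_eq_div, div_left_inj' (by positivity)]
  rw [show 2 * π * (n + 1) * (z - ⌊z⌋) = 2 * π * (n + 1) * z - ((n + 1) * ⌊z⌋ : ℤ) * (2 * π) by
    push_cast; ring, sin_sub_int_mul_two_pi]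

lemma hasSum_trigHarmonic_div_pow {S : ℕ} (hS : 2 ≤ S) (k : ℤ) (y : ℝ) :
    HasSum (fun n : ℕ => trigHarmonic S k (π * (n + 1) * y) / ((n : ℝ) + 1) ^ S)
      (π ^ S * (((-1) ^ (S / 2 + 1) * 2 ^ S / 2 / S ! : ℚ) *
        aeval (Int.fract (k * y / 2)) (Polynomial.bernoulli S))) := by
  have harg (n : ℕ) : k * (π * (n + 1) * y) = 2 * π * (n + 1) * (k * y / 2) := by ring
  obtain ⟨m, rfl | rfl⟩ := Nat.even_or_odd' S
  · convert hasSum_cos_div_pow (m := m) (by omega) (k * y / 2) using 1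
    · simp [trigHarmonic, harg]
    · push_cast
      rw [Nat.mul_div_cancel_left _ two_pos, mul_pow]
      ring
  · convert hasSum_sin_div_pow (m := m) (by omega) (k * y / 2) using 1
    · simp [trigHarmonic, harg]
    · push_cast
      rw [show (2 * m + 1) / 2 = m by omega, mul_pow]
      ring

lemma Irrational.eventually_floor_eq {x : ℝ} (hx : Irrational x) : ∀ᶠ y in 𝓝 x, ⌊y⌋ = ⌊x⌋ := by
  have hx_mem : x ∈ Set.Ioo (⌊x⌋ : ℝ) (⌊x⌋ + 1) :=
    ⟨(Int.floor_le x).lt_of_ne (hx.ne_int _).symm, Int.lt_floor_add_one x⟩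
  filter_upwards [isOpen_Ioo.mem_nhds hx_mem] with y hy
  exact Int.floor_eq_iff.mpr ⟨hy.1.le, hy.2⟩

lemma Irrational.eventually_floor_intCast_mul_div_two_eq {τ : ℝ} (hτ : Irrational τ) (k : ℤ) :
    ∀ᶠ y in 𝓝 τ, ⌊(k : ℝ) * y / 2⌋ = ⌊(k : ℝ) * τ / 2⌋ := by
  rcases eq_or_ne k 0 with rfl | hk
  · simp
  have hcont : Continuous fun y : ℝ => k * y / 2 := by fun_prop
  have hirr : Irrational (k * τ / 2) := (hτ.intCast_mul hk).div_natCast two_ne_zero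
  simpa using (hcont.tendsto τ).eventually hirr.eventually_floor_eq

noncomputable def locallyPolyDirichlet (S : ℕ) (τ : ℝ) : Submodule ℚ (ℝ → ℝ) where
  carrier := {f | ∃ p : ℚ[X], ∀ᶠ y in 𝓝 τ,
    HasSum (fun n : ℕ => f (π * (n + 1) * y) / ((n : ℝ) + 1) ^ S) (π ^ S * aeval y p)}
  zero_mem' := ⟨0, by simp [hasSum_zero]⟩
  add_mem' := by
    rintro f g ⟨p, hp⟩ ⟨q, hq⟩
    refine ⟨p + q, (hp.and hq).mono fun y h => ?_⟩
    simpa only [Pi.add_apply, add_div, map_add, mul_add] using h.1.add h.2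
  smul_mem' := by
    rintro c f ⟨p, hp⟩
    refine ⟨c • p, hp.mono fun y h => ?_⟩
    simpa only [Pi.smul_apply, Rat.smul_def, map_smul, mul_div_assoc, mul_left_comm] using
      h.mul_left (c : ℝ)

lemma trigHarmonic_mem_locallyPolyDirichlet {S : ℕ} (hS : 2 ≤ S) {τ : ℝ} (hτ : Irrational τ)
    (k : ℤ) : trigHarmonic S k ∈ locallyPolyDirichlet S τ := by
  refine ⟨C ((-1) ^ (S / 2 + 1) * 2 ^ S / 2 / S ! : ℚ) *
    (Polynomial.bernoulli S).comp (C (k / 2 : ℚ) * X - C (⌊(k : ℝ) * τ / 2⌋ : ℚ)), ?_⟩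
  filter_upwards [hτ.eventually_floor_intCast_mul_div_two_eq k] with y hy
  convert hasSum_trigHarmonic_div_pow hS k y using 3
  rw [← Int.self_sub_floor, hy]
  simp only [map_mul, aeval_C, aeval_comp, map_sub, aeval_X, eq_ratCast]
  push_cast
  rw [div_mul_eq_mul_div (k : ℝ)]

lemma trigHarmonicSpan_le_locallyPolyDirichlet {S : ℕ} (hS : 2 ≤ S) {τ : ℝ}
    (hτ : Irrational τ) : trigHarmonicSpan S ≤ locallyPolyDirichlet S τ :=
  span_le.mpr <| Set.range_subset_iff.mpr <| trigHarmonic_mem_locallyPolyDirichlet hS hτ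

/-- For integers a ≤ 0, b ≤ 0 and s > 1 of the same parity as b,
the series ψ_s^{a,b}(τ) is π^s times a piecewise polynomial with rational
coefficients: around any irrational τ there is a single rational polynomial
giving the value at all nearby irrationals. -/
theorem trig_dirichlet_piecewise_polynomial
    (a b s : ℤ) (ha : a ≤ 0) (hb : b ≤ 0) (hs : 1 < s) (hpar : s % 2 = b % 2) :
    ∀ τ : ℝ, Irrational τ →
      ∃ ε : ℝ, 0 < ε ∧ ∃ p : Polynomial ℚ,
        ∀ τ' : ℝ, Irrational τ' → |τ' - τ| < ε →
          ∑' n : ℕ, (Real.cos (π * (n + 1) * τ')) ^ (-a) * (Real.sin (π * (n + 1) * τ')) ^ (-b)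
              / ((n : ℝ) + 1) ^ s
            = π ^ s * (Polynomial.aeval τ' p) := by
  intro τ hτ
  obtain ⟨A, rfl⟩ := Int.exists_eq_neg_ofNat ha
  obtain ⟨B, rfl⟩ := Int.exists_eq_neg_ofNat hb
  obtain ⟨S, rfl⟩ := Int.eq_ofNat_of_zero_le (by omega : 0 ≤ s)
  have hparity : Even B ↔ Even S := by simp only [Nat.even_iff]; omega
  have hmem : cos ^ A * sin ^ B ∈ locallyPolyDirichlet S τ := by
    apply trigHarmonicSpan_le_locallyPolyDirichlet (by omega) hτ
    rw [trigHarmonicSpan, ← trigHarmonic_eq_of_even_iff hparity]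
    exact cos_pow_mul_sin_pow_mem_trigHarmonicSpan A B
  obtain ⟨p, hp⟩ := hmem
  obtain ⟨ε, hε, hball⟩ := Metric.eventually_nhds_iff.mp hp
  refine ⟨ε, hε, p, fun τ' _ hτ' => ?_⟩
  simpa only [neg_neg, zpow_natCast, Pi.mul_apply, Pi.pow_apply] using (hball hτ').tsum_eq
end

section
/- Let r ≥ 2 be an even integer. Then, in the complex numbers, Σ_{n=1}^∞ cot(πni)/n^{2r−1} = (1/2) · (2πi)^{2r−1} · Σ_{m=0}^{r} (−1)^{m+1} · (B_{2m}/(2m)!) · (B_{2(r−m)}/(2(r−m))!), where i is the imaginary unit and B_k denotes the k-th Bernoulli number. -/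
/-!
Let `N = r - 1`, which is odd. For odd `N` one has the identity
`(u + v) * ∑_{j<N} (-1)^j u^(j+1) v^(N-j) = u v (u^N + v^N)`. Evaluated at `u = 1/n²`, `v = 1/m²`
and summed over `n, m ≥ 1`, its left side gives the alternating sum of products
`ζ(2j+2) ζ(2N-2j)`, while its right side is twice `∑_{n,m} 1 / (n^(2N) (n² + m²))`, the two halves
being exchanged by `(n, m) ↦ (m, n)`. The inner sum over `m` is the partial fraction expansion
`∑_{m ≥ 1} 1 / (m² - w²) = (1 - π w cot(π w)) / (2 w²)` at `w = n i`, which produces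
`∑_n cot(π n i) / n^(2N+1)`. Finally `ζ(2k) = -(2πi)^(2k) B_{2k} / (2 (2k)!)` holds also for `k = 0`
(`ζ(0) = -1/2`), so the left-over `ζ(2r)` becomes the two boundary terms `m = 0, r` of the sum.
-/

open Complex Real Finset

theorem add_mul_sum_neg_one_pow_mul_pow {R : Type*} [CommRing R] {N : ℕ} (hN : Odd N) (u v : R) :
    (u + v) * ∑ j ∈ range N, (-1) ^ j * u ^ (j + 1) * v ^ (N - j) = u * v * (u ^ N + v ^ N) := by
  have hsum : ∑ j ∈ range N, (-1) ^ j * u ^ (j + 1) * v ^ (N - j)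
      = u * v * ∑ j ∈ range N, (-u) ^ j * v ^ (N - 1 - j) := by
    rw [mul_sum]
    refine sum_congr rfl fun j hj => ?_
    rw [show N - j = N - 1 - j + 1 by have := mem_range.mp hj; omega, neg_pow]
    ring
  have hgeom := geom_sum₂_mul (-u) v N
  rw [hN.neg_pow] at hgeom
  linear_combination (-(u * v)) * hgeom + (u + v) * hsum

theorem hasSum_div_two_of_hasSum_add_swap {ι : Type*} {g : ι × ι → ℝ} (hg : ∀ p, 0 ≤ g p) {s : ℝ}
    (h : HasSum (fun p : ι × ι => g p + g p.swap) s) : HasSum g (s / 2) := by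
  have hg_summable : Summable g :=
    h.summable.of_nonneg_of_le hg fun p => le_add_of_nonneg_right (hg p.swap)
  have hswap : HasSum (fun p : ι × ι => g p.swap) (∑' p, g p) :=
    (Equiv.prodComm ι ι).hasSum_iff.mpr hg_summable.hasSum
  rw [h.unique (hg_summable.hasSum.add hswap)]
  simpa using hg_summable.hasSum

theorem hasSum_pow_succ_mul_div_add {ι : Type*} {u : ι → ℝ} (hu : ∀ i, 0 < u i)
    (hs : ∀ k ≠ 0, Summable fun i => u i ^ k) {N : ℕ} (hN : Odd N) :
    HasSum (fun p : ι × ι => u p.1 ^ (N + 1) * u p.2 / (u p.1 + u p.2))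
      ((∑ j ∈ range N, (-1) ^ j * (∑' i, u i ^ (j + 1)) * ∑' i, u i ^ (N - j)) / 2) := by
  refine hasSum_div_two_of_hasSum_add_swap
    (fun p => by have := hu p.1; have := hu p.2; positivity) ?_
  have hprod (j : ℕ) (hj : j ∈ range N) :
      HasSum (fun p : ι × ι => (-1) ^ j * u p.1 ^ (j + 1) * u p.2 ^ (N - j))
        ((-1) ^ j * (∑' i, u i ^ (j + 1)) * ∑' i, u i ^ (N - j)) := by
    have h₁ := hs (j + 1) j.succ_ne_zero
    have h₂ := hs (N - j) (by have := mem_range.mp hj; omega)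
    simp only [mul_assoc]
    exact (h₁.hasSum.mul h₂.hasSum (h₁.mul_of_nonneg h₂ (fun i => (pow_pos (hu i) _).le)
      (fun i => (pow_pos (hu i) _).le))).mul_left _
  convert hasSum_sum hprod using 1
  funext p
  have := hu p.1
  have := hu p.2
  simp only [Prod.fst_swap, Prod.snd_swap]
  rw [add_comm (u p.2), ← add_div, div_eq_iff (by positivity)]
  linear_combination -add_mul_sum_neg_one_pow_mul_pow hN (u p.1) (u p.2)

theorem summable_one_div_succ_pow {k : ℕ} (hk : 1 < k) :
    Summable fun n : ℕ => 1 / ((n : ℝ) + 1) ^ k := by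
  simpa using (summable_nat_add_iff 1).mpr (Real.summable_one_div_nat_pow.mpr hk)

theorem hasSum_one_div_pow_mul_tsum_one_div_sq_add_sq {N : ℕ} (hN : Odd N) :
    HasSum (fun n : ℕ => 1 / ((n : ℝ) + 1) ^ (2 * N) *
        ∑' m : ℕ, 1 / (((n : ℝ) + 1) ^ 2 + ((m : ℝ) + 1) ^ 2))
      ((∑ j ∈ range N, (-1) ^ j * (∑' n : ℕ, 1 / ((n : ℝ) + 1) ^ (2 * (j + 1))) *
        ∑' n : ℕ, 1 / ((n : ℝ) + 1) ^ (2 * (N - j))) / 2) := by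
  have hpow (n k : ℕ) : (1 / ((n : ℝ) + 1) ^ 2) ^ k = 1 / ((n : ℝ) + 1) ^ (2 * k) := by
    rw [one_div_pow, ← pow_mul]
  have h := hasSum_pow_succ_mul_div_add (u := fun n : ℕ => 1 / ((n : ℝ) + 1) ^ 2)
    (fun n => by positivity)
    (fun k hk => by simpa only [hpow] using summable_one_div_succ_pow (by omega : 1 < 2 * k)) hN
  simp only [hpow] at h
  have hterm (p : ℕ × ℕ) : 1 / ((p.1 : ℝ) + 1) ^ (2 * (N + 1)) * (1 / ((p.2 : ℝ) + 1) ^ 2) /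
      (1 / ((p.1 : ℝ) + 1) ^ 2 + 1 / ((p.2 : ℝ) + 1) ^ 2)
      = 1 / ((p.1 : ℝ) + 1) ^ (2 * N) * (1 / (((p.1 : ℝ) + 1) ^ 2 + ((p.2 : ℝ) + 1) ^ 2)) := by
    field_simp
    ring
  rw [funext hterm] at h
  refine h.prod_fiberwise fun n => ?_
  rw [← tsum_mul_left]
  exact (h.summable.prod_factor n).hasSum

theorem hasSum_one_div_succ_sq_sub_sq {w : ℂ} (hw : w ∈ Complex.integerComplement) :
    HasSum (fun m : ℕ => 1 / (((m : ℂ) + 1) ^ 2 - w ^ 2))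
      ((1 - π * w * cot (π * w)) / (2 * w ^ 2)) := by
  have hw0 := Complex.integerComplement.ne_zero hw
  have hterm (m : ℕ) : cotTerm w m / -(2 * w) = 1 / (((m : ℂ) + 1) ^ 2 - w ^ 2) := by
    rw [cotTerm_identity hw,
      show ((m : ℂ) + 1) ^ 2 - w ^ 2 = -((w + (m + 1)) * (w - (m + 1))) by ring,
      one_div_neg_eq_neg_one_div]
    field_simp
  have hvalue : (π * cot (π * w) - 1 / w) / -(2 * w) = (1 - π * w * cot (π * w)) / (2 * w ^ 2) := by
    field_simp
    ring
  have h := ((summable_cotTerm hw).hasSum_iff_tendsto_nat.mpr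
    (tendsto_logDeriv_euler_cot_sub hw)).div_const (-(2 * w))
  rwa [funext hterm, hvalue] at h

theorem ofReal_mul_I_mem_integerComplement {x : ℝ} (hx : x ≠ 0) :
    (x : ℂ) * I ∈ Complex.integerComplement := by
  rintro ⟨k, hk⟩
  have him := congrArg Complex.im hk
  simp only [intCast_im, mul_im, ofReal_re, I_im, ofReal_im, I_re, mul_zero, mul_one,
    add_zero] at him
  exact hx him.symm

theorem ofReal_tsum_one_div_sq_add_succ_sq {x : ℝ} (hx : x ≠ 0) :
    ((∑' m : ℕ, 1 / (x ^ 2 + ((m : ℝ) + 1) ^ 2) : ℝ) : ℂ)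
      = (1 - π * (x * I) * cot (π * (x * I))) / (2 * (x * I) ^ 2) := by
  rw [ofReal_tsum]
  refine HasSum.tsum_eq ?_
  convert hasSum_one_div_succ_sq_sub_sq (ofReal_mul_I_mem_integerComplement hx) using 2 with m
  push_cast
  ring_nf
  simp only [I_sq]
  ring

theorem hasSum_one_div_succ_pow_two_mul {k : ℕ} (hk : k ≠ 0) :
    HasSum (fun n : ℕ => 1 / ((n : ℂ) + 1) ^ (2 * k)) (riemannZeta (2 * (k : ℕ))) := by
  have h := Complex.hasSum_ofReal.mpr (summable_one_div_succ_pow (by omega : 1 < 2 * k)).hasSum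
  push_cast at h
  convert h using 1
  rw [zeta_eq_tsum_one_div_nat_add_one_cpow (by simp; norm_cast; omega)]
  simp [← cpow_natCast]

theorem hasSum_cot_pi_mul_succ_mul_I_div_pow {N : ℕ} (hN : Odd N) :
    HasSum (fun n : ℕ => cot (π * (n + 1) * I) / ((n : ℂ) + 1) ^ (2 * N + 1))
      (-I / π * (riemannZeta (2 * (N + 1 : ℕ)) +
        ∑ j ∈ range N, (-1) ^ j * riemannZeta (2 * (j + 1 : ℕ)) * riemannZeta (2 * (N - j : ℕ)))) := by
  have hinner (n : ℕ) := ofReal_tsum_one_div_sq_add_succ_sq (x := (n : ℝ) + 1) (by positivity)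
  push_cast at hinner
  have hsum : ∑ j ∈ range N, (-1) ^ j * (∑' n : ℕ, 1 / ((n : ℂ) + 1) ^ (2 * (j + 1))) *
      ∑' n : ℕ, 1 / ((n : ℂ) + 1) ^ (2 * (N - j))
      = ∑ j ∈ range N, (-1) ^ j * riemannZeta (2 * (j + 1 : ℕ)) * riemannZeta (2 * (N - j : ℕ)) :=
    sum_congr rfl fun j hj => by
      rw [(hasSum_one_div_succ_pow_two_mul j.succ_ne_zero).tsum_eq,
        (hasSum_one_div_succ_pow_two_mul (by have := mem_range.mp hj; omega)).tsum_eq]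
  have hT := Complex.hasSum_ofReal.mpr (hasSum_one_div_pow_mul_tsum_one_div_sq_add_sq hN)
  push_cast [hinner] at hT
  rw [hsum] at hT
  have hπ : (π : ℂ) ≠ 0 := ofReal_ne_zero.mpr pi_ne_zero
  have hterm (n : ℕ) : 2 / (π * I) * (1 / ((n : ℂ) + 1) ^ (2 * N) *
      ((1 - π * (((n : ℂ) + 1) * I) * cot (π * (((n : ℂ) + 1) * I))) /
        (2 * (((n : ℂ) + 1) * I) ^ 2)) + 1 / ((n : ℂ) + 1) ^ (2 * (N + 1)) / 2)
      = cot (π * ((n : ℂ) + 1) * I) / ((n : ℂ) + 1) ^ (2 * N + 1) := by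
    have hx : (n : ℂ) + 1 ≠ 0 := by exact_mod_cast n.succ_ne_zero
    rw [← mul_assoc, mul_pow, I_sq]
    field_simp
    ring
  have hvalue (S Z : ℂ) : 2 / (π * I) * (S / 2 + Z / 2) = -I / π * (Z + S) := by
    field_simp
    ring_nf
    rw [I_sq]
    ring
  rw [← funext hterm, ← hvalue]
  exact (hT.add ((hasSum_one_div_succ_pow_two_mul N.succ_ne_zero).div_const 2)).mul_left _

theorem riemannZeta_two_mul_nat_eq (k : ℕ) :
    riemannZeta (2 * k) = -(2 * π * I) ^ (2 * k) * (bernoulli (2 * k) / (2 * k).factorial) / 2 := by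
  rw [riemannZeta_two_mul_nat', zpow_sub₀ two_ne_zero, zpow_one,
    show (2 * k : ℤ) = ((2 * k : ℕ) : ℤ) by push_cast; ring, zpow_natCast,
    mul_pow, mul_pow, pow_mul I, I_sq]
  ring

theorem riemannZeta_add_sum_eq_sum_neg_one_pow {N : ℕ} (hN : Odd N) :
    riemannZeta (2 * (N + 1 : ℕ)) +
        ∑ j ∈ range N, (-1) ^ j * riemannZeta (2 * (j + 1 : ℕ)) * riemannZeta (2 * (N - j : ℕ))
      = ∑ m ∈ range (N + 1 + 1),
        (-1) ^ (m + 1) * riemannZeta (2 * (m : ℕ)) * riemannZeta (2 * (N + 1 - m : ℕ)) := by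
  have hmiddle : ∑ j ∈ range N,
        (-1) ^ j * riemannZeta (2 * (j + 1 : ℕ)) * riemannZeta (2 * (N - j : ℕ))
      = ∑ j ∈ range N, (-1) ^ (j + 1 + 1) * riemannZeta (2 * (j + 1 : ℕ)) *
        riemannZeta (2 * (N + 1 - (j + 1) : ℕ)) :=
    sum_congr rfl fun j _ => by rw [Nat.add_sub_add_right]; ring
  rw [sum_range_succ, sum_range_succ', hmiddle, Nat.sub_self, Nat.sub_zero,
    hN.add_one.add_one.neg_one_pow]
  simp only [Nat.cast_zero, mul_zero, riemannZeta_zero, zero_add, pow_one]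
  ring

theorem neg_I_div_pi_mul_sum_riemannZeta_mul_riemannZeta (N : ℕ) :
    -I / π * ∑ m ∈ range (N + 1 + 1),
        (-1) ^ (m + 1) * riemannZeta (2 * (m : ℕ)) * riemannZeta (2 * (N + 1 - m : ℕ))
      = 1 / 2 * (2 * π * I) ^ (2 * N + 1) * ∑ m ∈ range (N + 1 + 1),
        (-1) ^ (m + 1) * ((bernoulli (2 * m) : ℂ) / (2 * m).factorial) *
          ((bernoulli (2 * (N + 1 - m)) : ℂ) / (2 * (N + 1 - m)).factorial) := by
  rw [mul_sum, mul_sum]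
  refine sum_congr rfl fun m hm => ?_
  have hc : -I / π * (2 * π * I) = 2 := by
    have hπ : (π : ℂ) ≠ 0 := ofReal_ne_zero.mpr pi_ne_zero
    field_simp
    ring_nf
    rw [I_sq]
    ring
  set c : ℂ := 2 * π * I
  set β : ℕ → ℂ := fun k => (bernoulli (2 * k) : ℂ) / (2 * k).factorial
  have hpow : c ^ (2 * m) * c ^ (2 * (N + 1 - m)) = c ^ (2 * N + 1) * c := by
    rw [← pow_add, ← pow_succ]
    congr 1
    have := mem_range.mp hm
    omega
  rw [riemannZeta_two_mul_nat_eq, riemannZeta_two_mul_nat_eq]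
  linear_combination (-I / π * (-1) ^ (m + 1) / 4 * β m * β (N + 1 - m)) * hpow +
    ((-1) ^ (m + 1) / 4 * β m * β (N + 1 - m) * c ^ (2 * N + 1)) * hc

/-- For even r ≥ 2,
Σ_{n≥1} cot(πni)/n^{2r−1}
  = (1/2)(2πi)^{2r−1} Σ_{m=0}^{r} (−1)^{m+1} B_{2m}/(2m)! · B_{2(r−m)}/(2(r−m))!. -/
theorem cot_pi_n_i_series
    (r : ℕ) (hr : 2 ≤ r) (hreven : Even r) :
    ∑' n : ℕ, Complex.cot ((Real.pi : ℂ) * (n + 1) * Complex.I) / ((n : ℂ) + 1) ^ (2 * r - 1)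
      = (1 / 2) * (2 * (Real.pi : ℂ) * Complex.I) ^ (2 * r - 1) *
          ∑ m ∈ Finset.range (r + 1),
            (-1 : ℂ) ^ (m + 1) * ((bernoulli (2 * m) : ℂ) / (Nat.factorial (2 * m) : ℂ)) *
              ((bernoulli (2 * (r - m)) : ℂ) / (Nat.factorial (2 * (r - m)) : ℂ)) := by
  obtain ⟨N, rfl, hN⟩ : ∃ N, r = N + 1 ∧ Odd N :=
    ⟨r - 1, by omega, Nat.Even.sub_odd (by omega) hreven odd_one⟩
  rw [show 2 * (N + 1) - 1 = 2 * N + 1 by omega, (hasSum_cot_pi_mul_succ_mul_I_div_pow hN).tsum_eq,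
    riemannZeta_add_sum_eq_sum_neg_one_pow hN, neg_I_div_pi_mul_sum_riemannZeta_mul_riemannZeta]
end
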